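/- Let N : ℕ, let A, P : Matrix (Fin N) (Fin N) ℝ with P symmetric (P = Pᵀ). Let ρ > 0, μ ∈ (0, ρ), ℓ ≥ 0, w_max ≥ 0, μ* ≥ 1, β > 0, and set θ := μ*·(2ρ+μ) + (ρ−μ) and Γ := μ*²·w_max²/(ρ−μ) + μ*·ℓ²/μ. Assume: (a) μ*·1 − P is positive semidefinite and P is positive semidefinite; (b) the LMI holds: −(Aᵀ*P + P*A) − θ·1 − β·P is positive semidefinite. Then for every x, gv, wv : Fin N → ℝ with ‖gv‖ ≤ ρ·‖x‖ + ℓ and ‖wv‖ ≤ w_max (Euclidean norm), the pointwise derivative bound holds: 2 · ((P *ᵥ x) ⬝ᵥ (A *ᵥ x + gv + wv)) ≤ −β · (x ⬝ᵥ (P *ᵥ x)) + Γ. -/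

import Mathlib

/-!
Along `ẋ = Ax + g + w` the derivative of `V = xᵀPx` is `2(Px)ᵀ(Ax) + 2(Px)ᵀg + 2(Px)ᵀw`.
The LMI bounds the first term by `-θ‖x‖² - βV`. Since `0 ≤ P ≤ μ*·1`, Cauchy–Schwarz for the
semi-inner product `xᵀPy` gives `|xᵀPy| ≤ μ*‖x‖‖y‖`, and Young's inequality with weights `μ` and
`ρ - μ` bounds the other two terms by `θ‖x‖² + Γ`, so the `‖x‖²` terms cancel.
-/

open Matrix

/-- Euclidean norm on `Fin N → ℝ`. -/
noncomputable def eucNorm {N : ℕ} (y : Fin N → ℝ) : ℝ :=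
  Real.sqrt (∑ i, y i ^ 2)

namespace Matrix

variable {n : Type*} [Fintype n] {P : Matrix n n ℝ}

theorem PosSemidef.mulVec_dotProduct_sq_le (hP : P.PosSemidef) (x y : n → ℝ) :
    ((P *ᵥ x) ⬝ᵥ y) ^ 2 ≤ ((P *ᵥ x) ⬝ᵥ x) * ((P *ᵥ y) ⬝ᵥ y) := by
  let _ := P.toSeminormedAddCommGroup hP
  let _ := P.toInnerProductSpace hP
  rw [sq]
  exact (real_inner_mul_inner_self_le y x).trans_eq (mul_comm _ _)

theorem mulVec_dotProduct_self_le_of_posSemidef_smul_one_sub [DecidableEq n] {c : ℝ}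
    (h : (c • 1 - P).PosSemidef) (x : n → ℝ) : (P *ᵥ x) ⬝ᵥ x ≤ c * (x ⬝ᵥ x) := by
  have := h.dotProduct_mulVec_nonneg x
  simp only [star_trivial, sub_mulVec, smul_mulVec, one_mulVec, dotProduct_sub,
    dotProduct_smul, smul_eq_mul, dotProduct_comm x (P *ᵥ x)] at this
  linarith

theorem PosSemidef.mulVec_dotProduct_sq_le_of_smul_one_sub [DecidableEq n] {c : ℝ}
    (hP : P.PosSemidef) (hc : (c • 1 - P).PosSemidef) (x y : n → ℝ) :
    ((P *ᵥ x) ⬝ᵥ y) ^ 2 ≤ c ^ 2 * (x ⬝ᵥ x) * (y ⬝ᵥ y) := by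
  have hx := mulVec_dotProduct_self_le_of_posSemidef_smul_one_sub hc x
  have hy := mulVec_dotProduct_self_le_of_posSemidef_smul_one_sub hc y
  have hx0 : 0 ≤ (P *ᵥ x) ⬝ᵥ x := dotProduct_comm x _ ▸ hP.dotProduct_mulVec_nonneg x
  have hy0 : 0 ≤ (P *ᵥ y) ⬝ᵥ y := dotProduct_comm y _ ▸ hP.dotProduct_mulVec_nonneg y
  calc ((P *ᵥ x) ⬝ᵥ y) ^ 2 ≤ ((P *ᵥ x) ⬝ᵥ x) * ((P *ᵥ y) ⬝ᵥ y) :=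
        hP.mulVec_dotProduct_sq_le x y
    _ ≤ (c * (x ⬝ᵥ x)) * (c * (y ⬝ᵥ y)) := mul_le_mul hx hy hy0 (hx0.trans hx)
    _ = c ^ 2 * (x ⬝ᵥ x) * (y ⬝ᵥ y) := by ring

theorem two_mul_mulVec_dotProduct_mulVec_le_of_posSemidef [DecidableEq n] {A : Matrix n n ℝ}
    {θ β : ℝ} (hP : P.IsHermitian) (hLMI : (-(Aᵀ * P + P * A) - θ • 1 - β • P).PosSemidef)
    (x : n → ℝ) :
    2 * ((P *ᵥ x) ⬝ᵥ (A *ᵥ x)) ≤ -θ * (x ⬝ᵥ x) - β * ((P *ᵥ x) ⬝ᵥ x) := by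
  have h := hLMI.dotProduct_mulVec_nonneg x
  have hPA : x ⬝ᵥ (P *ᵥ (A *ᵥ x)) = (P *ᵥ x) ⬝ᵥ (A *ᵥ x) := by
    rw [dotProduct_mulVec, ← mulVec_transpose, ← conjTranspose_eq_transpose_of_trivial, hP.eq]
  have hAP : x ⬝ᵥ (Aᵀ *ᵥ (P *ᵥ x)) = (P *ᵥ x) ⬝ᵥ (A *ᵥ x) := by
    rw [dotProduct_mulVec, vecMul_transpose, dotProduct_comm]
  simp only [star_trivial, sub_mulVec, add_mulVec, neg_mulVec, smul_mulVec, one_mulVec,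
    ← mulVec_mulVec, dotProduct_sub, dotProduct_add, dotProduct_neg, dotProduct_smul,
    smul_eq_mul, hPA, hAP, dotProduct_comm x (P *ᵥ x)] at h
  linarith

end Matrix

theorem eucNorm_sq {N : ℕ} (y : Fin N → ℝ) : eucNorm y ^ 2 = y ⬝ᵥ y := by
  rw [eucNorm, Real.sq_sqrt (by positivity)]
  simp [dotProduct, sq]

theorem mulVec_dotProduct_le_mul_eucNorm {N : ℕ} {P : Matrix (Fin N) (Fin N) ℝ} {c : ℝ}
    (hP : P.PosSemidef) (hc : (c • 1 - P).PosSemidef) (hc0 : 0 ≤ c) (x y : Fin N → ℝ) :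
    (P *ᵥ x) ⬝ᵥ y ≤ c * eucNorm x * eucNorm y := by
  refine le_of_sq_le_sq ?_
    (mul_nonneg (mul_nonneg hc0 (Real.sqrt_nonneg _)) (Real.sqrt_nonneg _))
  rw [mul_pow, mul_pow, eucNorm_sq, eucNorm_sq]
  exact hP.mulVec_dotProduct_sq_le_of_smul_one_sub hc x y

theorem pointwise_lyapunov_derivative_bound_general (N : ℕ)
    (A P : Matrix (Fin N) (Fin N) ℝ)
    (ρ μ ℓ wmax μs β : ℝ)
    (hμ : 0 < μ) (hμρ : μ < ρ)
    (hμs : 1 ≤ μs)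
    (hPupper : (μs • (1 : Matrix (Fin N) (Fin N) ℝ) - P).PosSemidef)
    (hPpsd : P.PosSemidef)
    (hLMI : (-(Aᵀ * P + P * A)
        - (μs * (2 * ρ + μ) + (ρ - μ)) • (1 : Matrix (Fin N) (Fin N) ℝ)
        - β • P).PosSemidef) :
    ∀ x gv wv : Fin N → ℝ,
      eucNorm gv ≤ ρ * eucNorm x + ℓ → eucNorm wv ≤ wmax →
      2 * ((P *ᵥ x) ⬝ᵥ (A *ᵥ x + gv + wv))
        ≤ -β * (x ⬝ᵥ (P *ᵥ x))
          + (μs ^ 2 * wmax ^ 2 / (ρ - μ) + μs * ℓ ^ 2 / μ) := by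
  intro x gv wv hg hwv
  have hμs0 : 0 ≤ μs := zero_le_one.trans hμs
  have hx0 : 0 ≤ eucNorm x := Real.sqrt_nonneg _
  have hPxy := mulVec_dotProduct_le_mul_eucNorm hPpsd hPupper hμs0 x
  have hAx := two_mul_mulVec_dotProduct_mulVec_le_of_posSemidef hPpsd.isHermitian hLMI x
  have hgx : 2 * ((P *ᵥ x) ⬝ᵥ gv) ≤ μs * (2 * ρ + μ) * eucNorm x ^ 2 + μs * ℓ ^ 2 / μ :=
    calc 2 * ((P *ᵥ x) ⬝ᵥ gv) ≤ 2 * (μs * eucNorm x * (ρ * eucNorm x + ℓ)) := by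
          gcongr; exact (hPxy gv).trans (by gcongr)
      _ = 2 * μs * ρ * eucNorm x ^ 2 + μs * (2 * eucNorm x * ℓ) := by ring
      _ ≤ 2 * μs * ρ * eucNorm x ^ 2 + μs * (μ * eucNorm x ^ 2 + μ⁻¹ * ℓ ^ 2) := by
          gcongr; exact two_mul_le_add_mul_sq hμ
      _ = μs * (2 * ρ + μ) * eucNorm x ^ 2 + μs * ℓ ^ 2 / μ := by ring
  have hwx : 2 * ((P *ᵥ x) ⬝ᵥ wv) ≤ (ρ - μ) * eucNorm x ^ 2 + μs ^ 2 * wmax ^ 2 / (ρ - μ) :=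
    calc 2 * ((P *ᵥ x) ⬝ᵥ wv) ≤ 2 * (μs * eucNorm x * wmax) := by
          gcongr; exact (hPxy wv).trans (by gcongr)
      _ = 2 * eucNorm x * (μs * wmax) := by ring
      _ ≤ (ρ - μ) * eucNorm x ^ 2 + (ρ - μ)⁻¹ * (μs * wmax) ^ 2 :=
          two_mul_le_add_mul_sq (sub_pos.2 hμρ)
      _ = (ρ - μ) * eucNorm x ^ 2 + μs ^ 2 * wmax ^ 2 / (ρ - μ) := by ring
  rw [eucNorm_sq] at hgx hwx
  rw [dotProduct_add, dotProduct_add, dotProduct_comm x]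
  linarith

/-- Pointwise Lyapunov derivative estimate `V̇ ≤ −βV + Γ` along the perturbed
linear dynamics `ẋ = Ax + g + w`, with exact cancellation of the `‖x‖²`
cross-terms via Young's inequality and the LMI. -/
theorem pointwise_lyapunov_derivative_bound (N : ℕ)
    (A P : Matrix (Fin N) (Fin N) ℝ) (hPsym : P = Pᵀ)
    (ρ μ ℓ wmax μs β : ℝ)
    (hρ : 0 < ρ) (hμ : 0 < μ) (hμρ : μ < ρ)
    (hℓ : 0 ≤ ℓ) (hw : 0 ≤ wmax) (hμs : 1 ≤ μs) (hβ : 0 < β)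
    (hPupper : (μs • (1 : Matrix (Fin N) (Fin N) ℝ) - P).PosSemidef)
    (hPpsd : P.PosSemidef)
    (hLMI : (-(Aᵀ * P + P * A)
        - (μs * (2 * ρ + μ) + (ρ - μ)) • (1 : Matrix (Fin N) (Fin N) ℝ)
        - β • P).PosSemidef) :
    ∀ x gv wv : Fin N → ℝ,
      eucNorm gv ≤ ρ * eucNorm x + ℓ → eucNorm wv ≤ wmax →
      2 * ((P *ᵥ x) ⬝ᵥ (A *ᵥ x + gv + wv))
        ≤ -β * (x ⬝ᵥ (P *ᵥ x))
          + (μs ^ 2 * wmax ^ 2 / (ρ - μ) + μs * ℓ ^ 2 / μ) :=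
  pointwise_lyapunov_derivative_bound_general N A P ρ μ ℓ wmax μs β hμ hμρ hμs hPupper hPpsd hLMI
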